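/- Let κ be an uncountable regular cardinal with κ^{<κ} = κ. If all sets in a pointclass Γ closed under continuous preimages are κ-Silver-measurable, then all sets in Γ are κ-Sacks-measurable. More precisely: given a κ-Sacks tree T, the order-preserving bijection φ of 2^{<κ} with the splitting nodes of T induces a homeomorphism φ* : 2^κ → [T]; if A ∈ Γ and S is a κ-Silver tree with [S] ⊆ (φ*)^{-1}(A) (resp. disjoint from it), then the tree generated by φ''S is a κ-Sacks subtree of T whose branch set is contained in A (resp. disjoint from A). -/

import Mathlib

open Cardinal Set

structure PreSeq2 where
  len : Ordinal
  val : Ordinal → Bool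

def PreSeq2.Canonical (s : PreSeq2) : Prop := ∀ i, s.len ≤ i → s.val i = false

def PreSeq2.Ext (s t : PreSeq2) : Prop := s.len ≤ t.len ∧ ∀ i < s.len, s.val i = t.val i

noncomputable def restrictFn2 (x : Ordinal → Bool) (a : Ordinal) : PreSeq2 :=
  ⟨a, fun i => if i < a then x i else false⟩

noncomputable def PreSeq2.snoc (s : PreSeq2) (b : Bool) : PreSeq2 :=
  ⟨s.len + 1, fun i => if i < s.len then s.val i else if i = s.len then b else false⟩

def IsClubIn (c : Set Ordinal) (k : Ordinal) : Prop :=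
  c ⊆ Set.Iio k ∧
  (∀ l, l < k → Order.IsSuccLimit l → (∀ a < l, ∃ b ∈ c, a ≤ b ∧ b < l) → l ∈ c) ∧
  (∀ a < k, ∃ b ∈ c, a ≤ b)

def Splitting (T : Set PreSeq2) (t : PreSeq2) : Prop :=
  PreSeq2.snoc t false ∈ T ∧ PreSeq2.snoc t true ∈ T

def IsSacks (κ : Cardinal) (T : Set PreSeq2) : Prop :=
  T.Nonempty ∧
  (∀ s ∈ T, s.len < κ.ord ∧ s.Canonical) ∧
  (∀ s ∈ T, ∀ a ≤ s.len, restrictFn2 s.val a ∈ T) ∧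
  (∀ s ∈ T, ∃ t ∈ T, PreSeq2.Ext s t ∧ s.len < t.len) ∧
  (∀ x : Ordinal → Bool, ∀ l, l < κ.ord → Order.IsSuccLimit l →
    (∀ a < l, restrictFn2 x a ∈ T) → restrictFn2 x l ∈ T) ∧
  (∀ s ∈ T, ∃ t ∈ T, PreSeq2.Ext s t ∧ Splitting T t) ∧
  (∀ x : Ordinal → Bool, ∀ l, l < κ.ord → Order.IsSuccLimit l →
    (∀ a < l, ∃ b, a ≤ b ∧ b < l ∧ Splitting T (restrictFn2 x b)) →
    Splitting T (restrictFn2 x l))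

def Branches2 (κ : Cardinal) (T : Set PreSeq2) : Set (Ordinal → Bool) :=
  { x | ∀ a < κ.ord, restrictFn2 x a ∈ T }


def boundedTop2 (κ : Cardinal) : TopologicalSpace (Ordinal → Bool) :=
  TopologicalSpace.generateFrom
    { U | ∃ a < κ.ord, ∃ s : Ordinal → Bool, U = { x | ∀ i < a, x i = s i } }

/-- Uniform tree: splitting depends only on the level. -/
def Uniform (T : Set PreSeq2) : Prop :=
  ∀ s ∈ T, ∀ t ∈ T, s.len = t.len → ∀ b, (PreSeq2.snoc s b ∈ T ↔ PreSeq2.snoc t b ∈ T)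

/-- κ-Silver tree: a uniform κ-Sacks tree. -/
def IsSilver (κ : Cardinal) (T : Set PreSeq2) : Prop :=
  IsSacks κ T ∧ Uniform T

/-- κ-Sacks measurability (strong sense). -/
def SacksMeasurable (κ : Cardinal) (A : Set (Ordinal → Bool)) : Prop :=
  ∀ T, IsSacks κ T → ∃ S, IsSacks κ S ∧ S ⊆ T ∧
    (Branches2 κ S ⊆ A ∨ Branches2 κ S ∩ A = ∅)

/-- κ-Silver measurability (strong sense). -/
def SilverMeasurable (κ : Cardinal) (A : Set (Ordinal → Bool)) : Prop :=
  ∀ T, IsSilver κ T → ∃ S, IsSilver κ S ∧ S ⊆ T ∧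
    (Branches2 κ S ⊆ A ∨ Branches2 κ S ∩ A = ∅)

/-!
For a `κ`-Sacks tree `T` and a node `s ∈ T`, `phiNode T s x o` is the paper's `φ(x ↾ o)`: the
splitting nodes of `T` above `s` along `x`, turning in direction `x c` right after `φ(x ↾ c)` and
taking unions at limit stages, which stay in `T` and splitting by the closure axioms and the
regularity of `κ`. The induced map `φ*` is continuous, so `φ*⁻¹ A ∈ Γ`, and Silver measurability
applied to the full tree yields a Silver, in particular Sacks, tree `S` whose branches all lie in
`φ*⁻¹ A` or all avoid it. The tree generated by `φ* '' [S]` is a Sacks subtree of `T`: its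
splitting nodes are the `φ(w ↾ d)` with `w ↾ d` splitting in `S`, and `φ* '' [S]` is closed since
`x` can be read back from `φ*(x)` at the positions `|φ(x ↾ d)|`. Its branches are `φ*`-images of
branches of `S`, so they all lie in `A` or all avoid it.
-/

namespace PreSeq2

theorem ext' {s t : PreSeq2} (hlen : s.len = t.len) (hval : s.val = t.val) : s = t := by
  cases s; cases t; congr

theorem Ext.refl (s : PreSeq2) : s.Ext s := ⟨le_rfl, fun _ _ => rfl⟩

theorem Ext.trans {s t u : PreSeq2} (hst : s.Ext t) (htu : t.Ext u) : s.Ext u :=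
  ⟨hst.1.trans htu.1, fun i hi => (hst.2 i hi).trans (htu.2 i (hi.trans_le hst.1))⟩

theorem snoc_val_of_lt {s : PreSeq2} {i : Ordinal} (b : Bool) (hi : i < s.len) :
    (s.snoc b).val i = s.val i := if_pos hi

@[simp] theorem snoc_val_len (s : PreSeq2) (b : Bool) : (s.snoc b).val s.len = b := by
  simp [snoc]

theorem ext_snoc (s : PreSeq2) (b : Bool) : s.Ext (s.snoc b) :=
  ⟨(lt_add_one _).le, fun _ hi => (snoc_val_of_lt b hi).symm⟩

theorem canonical_snoc (s : PreSeq2) (b : Bool) : (s.snoc b).Canonical := by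
  intro i hi
  have hlt : s.len < i := Order.add_one_le_iff.1 hi
  simp [snoc, hlt.not_gt, hlt.ne']

end PreSeq2

open PreSeq2

theorem restrictFn2_val_of_lt {x : Ordinal → Bool} {a i : Ordinal} (hi : i < a) :
    (restrictFn2 x a).val i = x i := if_pos hi

theorem canonical_restrictFn2 (x : Ordinal → Bool) (a : Ordinal) : (restrictFn2 x a).Canonical :=
  fun _ hi => if_neg hi.not_gt

theorem restrictFn2_congr {x y : Ordinal → Bool} {a : Ordinal} (h : ∀ i < a, x i = y i) :
    restrictFn2 x a = restrictFn2 y a :=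
  PreSeq2.ext' rfl <| funext fun i => by
    by_cases hi : i < a
    · simp only [restrictFn2, if_pos hi, h i hi]
    · simp only [restrictFn2, if_neg hi]

theorem restrictFn2_inj {x y : Ordinal → Bool} {a b : Ordinal}
    (h : restrictFn2 x a = restrictFn2 y b) : a = b ∧ ∀ i < a, x i = y i := by
  have hab : a = b := congrArg PreSeq2.len h
  refine ⟨hab, fun i hi => ?_⟩
  have := congrArg (fun s => s.val i) h
  simpa [restrictFn2_val_of_lt hi, restrictFn2_val_of_lt (hab ▸ hi)] using this

theorem ext_restrictFn2 (x : Ordinal → Bool) {a b : Ordinal} (h : a ≤ b) :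
    (restrictFn2 x a).Ext (restrictFn2 x b) :=
  ⟨h, fun i (hi : i < a) => by
    rw [restrictFn2_val_of_lt hi, restrictFn2_val_of_lt (hi.trans_le h)]⟩

theorem restrictFn2_val_restrictFn2 (x : Ordinal → Bool) {a b : Ordinal} (h : a ≤ b) :
    restrictFn2 (restrictFn2 x b).val a = restrictFn2 x a :=
  restrictFn2_congr fun _ hi => restrictFn2_val_of_lt (hi.trans_le h)

theorem PreSeq2.Canonical.restrictFn2_eq {s : PreSeq2} (hs : s.Canonical) :
    restrictFn2 s.val s.len = s :=
  PreSeq2.ext' rfl <| funext fun i => by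
    by_cases hi : i < s.len
    · exact restrictFn2_val_of_lt hi
    · simp only [restrictFn2, if_neg hi, hs i (not_lt.1 hi)]

theorem PreSeq2.Ext.restrictFn2_eq {s t : PreSeq2} (hst : s.Ext t) (hs : s.Canonical) :
    restrictFn2 t.val s.len = s := by
  rw [← hs.restrictFn2_eq]
  exact restrictFn2_congr fun i hi => (hst.2 i hi).symm

theorem snoc_restrictFn2 {x : Ordinal → Bool} {a : Ordinal} :
    (restrictFn2 x a).snoc (x a) = restrictFn2 x (a + 1) := by
  refine PreSeq2.ext' rfl <| funext fun i => ?_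
  rcases lt_trichotomy i a with h | rfl | h
  · simp [PreSeq2.snoc, restrictFn2, h, h.le]
  · simp [PreSeq2.snoc, restrictFn2]
  · simp [PreSeq2.snoc, restrictFn2, h.not_gt, h.ne', Order.lt_add_one_iff, h.not_ge]

theorem eq_of_restrictFn2_snoc_eq_restrictFn2 {y z : Ordinal → Bool} {a b : Ordinal} {c : Bool}
    (h : (restrictFn2 y b).snoc c = restrictFn2 z a) :
    a = b + 1 ∧ (∀ i < b, y i = z i) ∧ z b = c := by
  have ha : a = b + 1 := (congrArg PreSeq2.len h).symm
  have hval : ∀ i < b + 1, ((restrictFn2 y b).snoc c).val i = z i := fun i hi => by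
    rw [h, restrictFn2_val_of_lt (ha ▸ hi)]
  refine ⟨ha, fun i hi => ?_, ?_⟩
  · rw [← restrictFn2_val_of_lt (x := y) hi, ← snoc_val_of_lt c (by exact hi),
      hval i (hi.trans (lt_add_one _))]
  · rw [← hval _ (lt_add_one _)]
    exact snoc_val_len _ c

theorem splitting_iff {T : Set PreSeq2} {t : PreSeq2} : Splitting T t ↔ ∀ b, t.snoc b ∈ T :=
  ⟨fun h b => by cases b; exacts [h.1, h.2], fun h => ⟨h false, h true⟩⟩

namespace IsSacks

variable {κ : Cardinal} {T : Set PreSeq2} (hT : IsSacks κ T)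
include hT

theorem len_lt {s : PreSeq2} (hs : s ∈ T) : s.len < κ.ord := (hT.2.1 s hs).1

theorem canonical {s : PreSeq2} (hs : s ∈ T) : s.Canonical := (hT.2.1 s hs).2

theorem restrictFn2_mem {s : PreSeq2} (hs : s ∈ T) {a : Ordinal} (ha : a ≤ s.len) :
    restrictFn2 s.val a ∈ T :=
  hT.2.2.1 s hs a ha

theorem restrictFn2_mem_of_isSuccLimit {x : Ordinal → Bool} {l : Ordinal} (hl : l < κ.ord)
    (hlim : Order.IsSuccLimit l) (h : ∀ a < l, restrictFn2 x a ∈ T) : restrictFn2 x l ∈ T :=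
  hT.2.2.2.2.1 x l hl hlim h

theorem exists_ext_splitting {s : PreSeq2} (hs : s ∈ T) : ∃ t ∈ T, s.Ext t ∧ Splitting T t :=
  hT.2.2.2.2.2.1 s hs

theorem splitting_of_isSuccLimit {x : Ordinal → Bool} {l : Ordinal} (hl : l < κ.ord)
    (hlim : Order.IsSuccLimit l)
    (h : ∀ a < l, ∃ b, a ≤ b ∧ b < l ∧ Splitting T (restrictFn2 x b)) :
    Splitting T (restrictFn2 x l) :=
  hT.2.2.2.2.2.2 x l hl hlim h

end IsSacks

theorem Cardinal.IsRegular.isSuccLimit_ord {κ : Cardinal} (hreg : κ.IsRegular) :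
    Order.IsSuccLimit κ.ord :=
  Cardinal.isSuccLimit_ord hreg.aleph0_le

theorem iSup_Iio_lt_ord {κ : Cardinal} (hreg : κ.IsRegular) {o : Ordinal} (ho : o < κ.ord)
    {f : Ordinal → Ordinal} (hf : ∀ c < o, f c < κ.ord) :
    ⨆ c : Set.Iio o, f c < κ.ord := by
  refine Ordinal.lift_iSup_lt_of_lt_cof ?_ fun c => hf c c.2
  rw [Cardinal.mk_Iio_ordinal, ← Ordinal.lift_cof, hreg.cof_ord, Cardinal.lift_lift,
    Cardinal.lift_lt]
  exact Cardinal.lt_ord.1 ho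

theorem exists_forall_val_eq_of_chain {o : Ordinal} {g : Ordinal → PreSeq2}
    (hg : ∀ c c', c < c' → c' < o → (g c).Ext (g c')) :
    ∃ x : Ordinal → Bool, ∀ c < o, ∀ i < (g c).len, x i = (g c).val i := by
  classical
  refine ⟨fun i => if h : ∃ c < o, i < (g c).len then (g h.choose).val i else false,
    fun c hc i hi => ?_⟩
  have h : ∃ c < o, i < (g c).len := ⟨c, hc, hi⟩
  obtain ⟨hco, hic⟩ := h.choose_spec
  dsimp only
  rw [dif_pos h]
  rcases lt_trichotomy h.choose c with hlt | heq | hgt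
  · exact (hg _ _ hlt hc).2 i hic
  · rw [heq]
  · exact ((hg _ _ hgt hco).2 i hi).symm

/-- The union of a strictly increasing chain `g c` (`c < o`) of nodes of a `κ`-Sacks tree. -/
theorem IsSacks.exists_limit_node {κ : Cardinal} {W : Set PreSeq2} (hreg : κ.IsRegular)
    (hW : IsSacks κ W) {o : Ordinal} (ho : o < κ.ord) (hlim : Order.IsSuccLimit o)
    {g : Ordinal → PreSeq2} (hmem : ∀ c < o, g c ∈ W)
    (hchain : ∀ c c', c < c' → c' < o → (g c).Ext (g c') ∧ (g c).len < (g c').len)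
    (hlen : ∀ c < o, c ≤ (g c).len) :
    ∃ u ∈ W, (∀ c < o, (g c).Ext u ∧ (g c).len < u.len) ∧ o ≤ u.len ∧
      (∀ a < u.len, ∃ c < o, a < (g c).len) ∧
      ((∀ c < o, Splitting W (g c)) → Splitting W u) := by
  have : Nonempty (Set.Iio o) := ⟨⟨0, hlim.pos⟩⟩
  set L := ⨆ c : Set.Iio o, (g c).len
  have hbdd : BddAbove (Set.range fun c : Set.Iio o => (g c).len) :=
    ⟨κ.ord, by rintro _ ⟨c, rfl⟩; exact (hW.len_lt (hmem c c.2)).le⟩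
  have hle : ∀ c < o, (g c).len ≤ L := fun c hc => le_ciSup hbdd (⟨c, hc⟩ : Set.Iio o)
  have hlt : ∀ c < o, (g c).len < L := fun c hc =>
    (hchain c _ (lt_add_one c) (hlim.add_one_lt hc)).2.trans_le (hle _ (hlim.add_one_lt hc))
  have hcof : ∀ a < L, ∃ c < o, a < (g c).len := fun a ha => by
    obtain ⟨⟨c, hc⟩, hac⟩ := (lt_ciSup_iff hbdd).1 ha
    exact ⟨c, hc, hac⟩
  have hoL : o ≤ L := not_lt.1 fun h => (hlen L h).not_gt (hlt L h)
  have hLκ : L < κ.ord := iSup_Iio_lt_ord hreg ho fun c hc => hW.len_lt (hmem c hc)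
  have hLlim : Order.IsSuccLimit L :=
    (isLUB_ciSup hbdd).isSuccLimit_of_notMem (Set.range_nonempty _)
      (by rintro ⟨c, hc⟩; exact (hlt c c.2).ne hc)
  obtain ⟨x, hx⟩ := exists_forall_val_eq_of_chain fun c c' h h' => (hchain c c' h h').1
  have hrestrict : ∀ c < o, restrictFn2 x (g c).len = g c := fun c hc => by
    rw [restrictFn2_congr (hx c hc), (hW.canonical (hmem c hc)).restrictFn2_eq]
  have hbelow : ∀ a < L, ∃ c < o, a < (g c).len ∧ restrictFn2 x a = restrictFn2 (g c).val a :=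
    fun a ha => by
      obtain ⟨c, hc, hac⟩ := hcof a ha
      exact ⟨c, hc, hac, restrictFn2_congr fun i hi => hx c hc i (hi.trans hac)⟩
  refine ⟨restrictFn2 x L, ?_, fun c hc => ⟨?_, hlt c hc⟩, hoL, hcof, fun hsplit => ?_⟩
  · refine hW.restrictFn2_mem_of_isSuccLimit hLκ hLlim fun a ha => ?_
    obtain ⟨c, hc, hac, heq⟩ := hbelow a ha
    rw [heq]
    exact hW.restrictFn2_mem (hmem c hc) hac.le
  · rw [← hrestrict c hc]
    exact ext_restrictFn2 x (hle c hc)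
  · refine hW.splitting_of_isSuccLimit hLκ hLlim fun a ha => ?_
    obtain ⟨c, hc, hac⟩ := hcof a ha
    exact ⟨(g c).len, hac.le, hlt c hc, hrestrict c hc ▸ hsplit c hc⟩

/-- `t` is an admissible value of the paper's `φ(x ↾ o)`, given the earlier values
`prev c = φ(x ↾ c)`; the last clause makes `t` the union of the earlier values at limit `o`. -/
def IsPhiNode (T : Set PreSeq2) (s : PreSeq2) (x : Ordinal → Bool) (o : Ordinal)
    (prev : Ordinal → PreSeq2) (t : PreSeq2) : Prop :=
  t ∈ T ∧ Splitting T t ∧ s.Ext t ∧ o ≤ t.len ∧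
  (∀ c < o, (prev c).Ext t ∧ (prev c).len < t.len) ∧
  (∀ c < o, o = c + 1 → t.val (prev c).len = x c) ∧
  (Order.IsSuccLimit o → ∀ a < t.len, ∃ c < o, a < (prev c).len)

noncomputable def phiNode (T : Set PreSeq2) (s : PreSeq2) (x : Ordinal → Bool) :
    Ordinal → PreSeq2
  | o => @Classical.epsilon _ ⟨s⟩
      (IsPhiNode T s x o fun c => if _ : c < o then phiNode T s x c else s)
termination_by o => o

theorem isPhiNode_congr {T : Set PreSeq2} {s : PreSeq2} {x x' : Ordinal → Bool} {o : Ordinal}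
    {prev prev' : Ordinal → PreSeq2} (hprev : ∀ c < o, prev c = prev' c)
    (hx : ∀ c < o, x c = x' c) : IsPhiNode T s x o prev = IsPhiNode T s x' o prev' := by
  ext t
  unfold IsPhiNode
  refine and_congr_right' <| and_congr_right' <| and_congr_right' <| and_congr_right' <|
    and_congr ?_ (and_congr ?_ ?_)
  · exact forall₂_congr fun c hc => by rw [hprev c hc]
  · exact forall₂_congr fun c hc => by rw [hprev c hc, hx c hc]
  · exact imp_congr_right fun _ => forall₂_congr fun a _ =>
      exists_congr fun c => and_congr_right fun hc => by rw [hprev c hc]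

theorem phiNode_eq (T : Set PreSeq2) (s : PreSeq2) (x : Ordinal → Bool) (o : Ordinal) :
    phiNode T s x o = @Classical.epsilon _ ⟨s⟩ (IsPhiNode T s x o (phiNode T s x)) := by
  rw [phiNode, isPhiNode_congr (prev' := phiNode T s x) (x' := x) (fun c hc => dif_pos hc)
    fun _ _ => rfl]

theorem phiNode_congr (T : Set PreSeq2) (s : PreSeq2) {x x' : Ordinal → Bool} (o : Ordinal)
    (h : ∀ i < o, x i = x' i) : phiNode T s x o = phiNode T s x' o := by
  induction o using WellFoundedLT.induction with
  | _ o ih =>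
  rw [phiNode_eq, phiNode_eq, isPhiNode_congr (fun c hc => ih c hc fun i hi => h i (hi.trans hc)) h]

section IsPhiNode

variable {κ : Cardinal} {T : Set PreSeq2} (hT : IsSacks κ T) {s : PreSeq2} {x : Ordinal → Bool}
  {prev : Ordinal → PreSeq2}
include hT

theorem exists_isPhiNode_zero (hs : s ∈ T) : ∃ t, IsPhiNode T s x 0 prev t := by
  obtain ⟨t, ht, hst, hsplit⟩ := hT.exists_ext_splitting hs
  exact ⟨t, ht, hsplit, hst, zero_le, fun c hc => absurd hc not_lt_zero,
    fun c hc => absurd hc not_lt_zero, fun h => absurd h Ordinal.not_isSuccLimit_zero⟩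

theorem exists_isPhiNode_add_one {c : Ordinal} (hc : IsPhiNode T s x c prev (prev c)) :
    ∃ t, IsPhiNode T s x (c + 1) prev t := by
  obtain ⟨hmem, hsplit, hsc, hclen, hbelow, -, -⟩ := hc
  obtain ⟨t, ht, hct, htsplit⟩ := hT.exists_ext_splitting (splitting_iff.1 hsplit (x c))
  have hext : (prev c).Ext t := (ext_snoc _ _).trans hct
  have hlen : (prev c).len < t.len := (lt_add_one _).trans_le hct.1
  refine ⟨t, ht, htsplit, hsc.trans hext, Order.add_one_le_iff.2 (hclen.trans_lt hlen),
    fun d hd => ?_, fun d _ hd => ?_, fun h => absurd h (Order.not_isSuccLimit_add_one c)⟩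
  · rcases (Order.lt_add_one_iff.1 hd).lt_or_eq with hd | rfl
    · exact ⟨(hbelow d hd).1.trans hext, (hbelow d hd).2.trans hlen⟩
    · exact ⟨hext, hlen⟩
  · obtain rfl : c = d := by simpa using hd
    rw [← hct.2 _ (lt_add_one _), snoc_val_len]

theorem exists_isPhiNode_of_isSuccLimit (hreg : κ.IsRegular) {o : Ordinal} (ho : o < κ.ord)
    (hlim : Order.IsSuccLimit o) (hprev : ∀ c < o, IsPhiNode T s x c prev (prev c)) :
    ∃ t, IsPhiNode T s x o prev t := by
  obtain ⟨u, hu, hext, hou, hcof, hsplit⟩ := hT.exists_limit_node hreg ho hlim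
    (fun c hc => (hprev c hc).1) (fun c c' h h' => (hprev c' h').2.2.2.2.1 c h)
    (fun c hc => (hprev c hc).2.2.2.1)
  refine ⟨u, hu, hsplit fun c hc => (hprev c hc).2.1,
    (hprev 0 hlim.pos).2.2.1.trans (hext 0 hlim.pos).1, hou, hext,
    fun c hc h => absurd (h ▸ hlim.add_one_lt hc) (lt_irrefl o), fun _ => hcof⟩

end IsPhiNode

section PhiNode

variable {κ : Cardinal} {T : Set PreSeq2} (hreg : κ.IsRegular) (hT : IsSacks κ T) {s : PreSeq2}
  (hs : s ∈ T) {x : Ordinal → Bool} {c o : Ordinal}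
include hreg hT hs

theorem isPhiNode_phiNode (ho : o < κ.ord) :
    IsPhiNode T s x o (phiNode T s x) (phiNode T s x o) := by
  induction o using WellFoundedLT.induction with
  | _ o ih =>
  rw [phiNode_eq]
  refine Classical.epsilon_spec (p := IsPhiNode T s x o (phiNode T s x)) ?_
  rcases Ordinal.zero_or_succ_or_isSuccLimit o with rfl | ⟨c, rfl⟩ | hlim
  · exact exists_isPhiNode_zero hT hs
  · rw [Order.succ_eq_add_one] at ih ho ⊢
    exact exists_isPhiNode_add_one hT (ih c (lt_add_one c) ((lt_add_one c).trans ho))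
  · exact exists_isPhiNode_of_isSuccLimit hT hreg ho hlim fun c hc => ih c hc (hc.trans ho)

theorem phiNode_mem (ho : o < κ.ord) : phiNode T s x o ∈ T :=
  (isPhiNode_phiNode hreg hT hs ho).1

theorem ext_phiNode (ho : o < κ.ord) : s.Ext (phiNode T s x o) :=
  (isPhiNode_phiNode hreg hT hs ho).2.2.1

theorem le_len_phiNode (ho : o < κ.ord) : o ≤ (phiNode T s x o).len :=
  (isPhiNode_phiNode hreg hT hs ho).2.2.2.1

theorem len_phiNode_lt_ord (ho : o < κ.ord) : (phiNode T s x o).len < κ.ord :=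
  hT.len_lt (phiNode_mem hreg hT hs ho)

theorem phiNode_ext_phiNode (hco : c < o) (ho : o < κ.ord) :
    (phiNode T s x c).Ext (phiNode T s x o) :=
  ((isPhiNode_phiNode hreg hT hs ho).2.2.2.2.1 c hco).1

theorem len_phiNode_lt_len_phiNode (hco : c < o) (ho : o < κ.ord) :
    (phiNode T s x c).len < (phiNode T s x o).len :=
  ((isPhiNode_phiNode hreg hT hs ho).2.2.2.2.1 c hco).2

theorem len_phiNode_le_len_phiNode (hco : c ≤ o) (ho : o < κ.ord) :
    (phiNode T s x c).len ≤ (phiNode T s x o).len := by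
  rcases hco.lt_or_eq with hco | rfl
  exacts [(len_phiNode_lt_len_phiNode hreg hT hs hco ho).le, le_rfl]

theorem phiNode_add_one_val_len (hc : c + 1 < κ.ord) :
    (phiNode T s x (c + 1)).val (phiNode T s x c).len = x c :=
  (isPhiNode_phiNode hreg hT hs hc).2.2.2.2.2.1 c (lt_add_one c) rfl

theorem exists_lt_len_phiNode_of_isSuccLimit (ho : o < κ.ord) (hlim : Order.IsSuccLimit o)
    {a : Ordinal} (ha : a < (phiNode T s x o).len) : ∃ c < o, a < (phiNode T s x c).len :=
  (isPhiNode_phiNode hreg hT hs ho).2.2.2.2.2.2 hlim a ha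

end PhiNode

/-- The branch `φ*(x)` of `T`: its `i`-th bit is read off `φ(x ↾ (i + 1))`, which is long enough
by `le_len_phiNode`. -/
noncomputable def phiBranch (T : Set PreSeq2) (s : PreSeq2) (x : Ordinal → Bool) (i : Ordinal) :
    Bool :=
  (phiNode T s x (i + 1)).val i

theorem phiBranch_congr {T : Set PreSeq2} {s : PreSeq2} {x x' : Ordinal → Bool} {i : Ordinal}
    (h : ∀ j < i + 1, x j = x' j) : phiBranch T s x i = phiBranch T s x' i := by
  rw [phiBranch, phiBranch, phiNode_congr T s (i + 1) h]

section PhiBranch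

variable {κ : Cardinal} {T : Set PreSeq2} (hreg : κ.IsRegular) (hT : IsSacks κ T) {s : PreSeq2}
  (hs : s ∈ T) {x : Ordinal → Bool}
include hreg hT hs

theorem phiBranch_eq_val {o i : Ordinal} (ho : o < κ.ord) (hi : i < (phiNode T s x o).len) :
    phiBranch T s x i = (phiNode T s x o).val i := by
  have hi1 : i + 1 < κ.ord :=
    hreg.isSuccLimit_ord.add_one_lt (hi.trans (len_phiNode_lt_ord hreg hT hs ho))
  rcases lt_trichotomy (i + 1) o with h | h | h
  · exact (phiNode_ext_phiNode hreg hT hs h ho).2 i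
      ((lt_add_one i).trans_le (le_len_phiNode hreg hT hs hi1))
  · rw [phiBranch, h]
  · exact ((phiNode_ext_phiNode hreg hT hs h hi1).2 i hi).symm

theorem restrictFn2_phiBranch_len_phiNode {o : Ordinal} (ho : o < κ.ord) :
    restrictFn2 (phiBranch T s x) (phiNode T s x o).len = phiNode T s x o := by
  rw [restrictFn2_congr fun i hi => phiBranch_eq_val hreg hT hs ho hi,
    (hT.canonical (phiNode_mem hreg hT hs ho)).restrictFn2_eq]

theorem phiBranch_len_phiNode {c : Ordinal} (hc : c < κ.ord) :
    phiBranch T s x (phiNode T s x c).len = x c := by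
  have hc1 : c + 1 < κ.ord := hreg.isSuccLimit_ord.add_one_lt hc
  rw [phiBranch_eq_val hreg hT hs hc1 (len_phiNode_lt_len_phiNode hreg hT hs (lt_add_one c) hc1),
    phiNode_add_one_val_len hreg hT hs hc1]

theorem restrictFn2_phiBranch_mem {a : Ordinal} (ha : a < κ.ord) :
    restrictFn2 (phiBranch T s x) a ∈ T := by
  rw [← restrictFn2_val_restrictFn2 _ (le_len_phiNode hreg hT hs ha),
    restrictFn2_phiBranch_len_phiNode hreg hT hs ha]
  exact hT.restrictFn2_mem (phiNode_mem hreg hT hs ha) (le_len_phiNode hreg hT hs ha)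

theorem phiBranch_mem_branches : phiBranch T s x ∈ Branches2 κ T :=
  fun _ ha => restrictFn2_phiBranch_mem hreg hT hs ha

theorem phiBranch_eq_phiBranch_of_lt_len {x' : Ordinal → Bool} {d : Ordinal} (hd : d < κ.ord)
    (h : ∀ j < d, x j = x' j) {i : Ordinal} (hi : i < (phiNode T s x d).len) :
    phiBranch T s x i = phiBranch T s x' i := by
  have hnode : phiNode T s x d = phiNode T s x' d := phiNode_congr T s d h
  rw [phiBranch_eq_val hreg hT hs hd hi, phiBranch_eq_val hreg hT hs hd (hnode ▸ hi), hnode]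

/-- `x` can be read back from `φ*(x)`: the bit `x d` sits at position `|φ(x ↾ d)|`. -/
theorem eq_of_phiBranch_eq {x' : Ordinal → Bool} {m : Ordinal}
    (h : ∀ i < m, phiBranch T s x i = phiBranch T s x' i) {d : Ordinal} (hd : d < κ.ord)
    (hdm : (phiNode T s x d).len < m) : x d = x' d := by
  induction d using WellFoundedLT.induction with
  | _ d ih =>
  have hnode : phiNode T s x d = phiNode T s x' d := phiNode_congr T s d fun j hj =>
    ih j hj (hj.trans hd) ((len_phiNode_lt_len_phiNode hreg hT hs hj hd).trans hdm)
  rw [← phiBranch_len_phiNode (x := x) hreg hT hs hd, h _ hdm, hnode,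
    phiBranch_len_phiNode hreg hT hs hd]

end PhiBranch

theorem IsSacks.exists_mem_branches {κ : Cardinal} {W : Set PreSeq2} (hreg : κ.IsRegular)
    (hW : IsSacks κ W) {s : PreSeq2} (hs : s ∈ W) :
    ∃ x ∈ Branches2 κ W, restrictFn2 x s.len = s := by
  have h0 : (0 : Ordinal) < κ.ord := hreg.ord_pos
  have hext := ext_phiNode (x := fun _ => false) hreg hW hs h0
  refine ⟨_, phiBranch_mem_branches (x := fun _ => false) hreg hW hs, ?_⟩
  rw [restrictFn2_congr fun i hi => phiBranch_eq_val hreg hW hs h0 (hi.trans_le hext.1)]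
  exact hext.restrictFn2_eq (hW.canonical hs)

/-- The candidate preimage of `y ↾ l` under `φ*`: its bit `d` is the bit of `y` at position
`|φ(· ↾ d)|`, the position where `φ*` records the bit `d`. -/
noncomputable def phiInv (T : Set PreSeq2) (s : PreSeq2) (l : Ordinal) (y : Ordinal → Bool) :
    Ordinal → Bool
  | d =>
    let L := (phiNode T s (fun i => if _ : i < d then phiInv T s l y i else false) d).len
    if L < l then y L else false
termination_by d => d

theorem phiInv_eq (T : Set PreSeq2) (s : PreSeq2) (l : Ordinal) (y : Ordinal → Bool)
    (d : Ordinal) :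
    phiInv T s l y d =
      if (phiNode T s (phiInv T s l y) d).len < l then y (phiNode T s (phiInv T s l y) d).len
      else false := by
  rw [phiInv, phiNode_congr (x' := phiInv T s l y) T s d fun i hi => dif_pos hi]

section PhiInv

variable {κ : Cardinal} {T : Set PreSeq2} (hreg : κ.IsRegular) (hT : IsSacks κ T) {s : PreSeq2}
  (hs : s ∈ T) {l : Ordinal} {y : Ordinal → Bool}
include hreg hT hs

theorem phiInv_eq_of_len_phiNode_lt {x : Ordinal → Bool} {a : Ordinal} (hal : a ≤ l)
    (hx : ∀ i < a, y i = phiBranch T s x i) {d : Ordinal} (hd : d < κ.ord)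
    (hda : (phiNode T s (phiInv T s l y) d).len < a) : phiInv T s l y d = x d := by
  induction d using WellFoundedLT.induction with
  | _ d ih =>
  have hnode : phiNode T s (phiInv T s l y) d = phiNode T s x d := phiNode_congr T s d
    fun j hj => ih j hj (hj.trans hd) ((len_phiNode_lt_len_phiNode hreg hT hs hj hd).trans hda)
  rw [phiInv_eq, if_pos (hda.trans_le hal), hx _ hda, hnode, phiBranch_len_phiNode hreg hT hs hd]

theorem phiBranch_phiInv (hl : l ≤ κ.ord) (hlim : Order.IsSuccLimit l)
    (h : ∀ a < l, ∃ x, ∀ i < a, y i = phiBranch T s x i) {i : Ordinal} (hi : i < l) :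
    phiBranch T s (phiInv T s l y) i = y i := by
  have hi1 : i + 1 < κ.ord :=
    hreg.isSuccLimit_ord.add_one_lt (hi.trans_le hl)
  obtain ⟨x, hx⟩ := h (i + 1) (hlim.add_one_lt hi)
  set q := phiInv T s l y
  obtain ⟨c, ⟨hcκ, hic⟩, hmin⟩ := wellFounded_lt.has_min {c | c < κ.ord ∧ i < (phiNode T s q c).len}
    ⟨i + 1, hi1, (lt_add_one i).trans_le (le_len_phiNode hreg hT hs hi1)⟩
  have hqx : ∀ j < c, q j = x j := fun j hj =>
    phiInv_eq_of_len_phiNode_lt hreg hT hs (hlim.add_one_lt hi).le hx (hj.trans hcκ)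
      (Order.lt_add_one_iff.2 (not_lt.1 fun hij => hmin j ⟨hj.trans hcκ, hij⟩ hj))
  rw [phiBranch_eq_phiBranch_of_lt_len hreg hT hs hcκ hqx hic, hx i (lt_add_one i)]

end PhiInv

section ClosedImage

variable {κ : Cardinal} {T S : Set PreSeq2} (hreg : κ.IsRegular) (hT : IsSacks κ T)
  (hS : IsSacks κ S) {s : PreSeq2} (hs : s ∈ T) {l : Ordinal} {y : Ordinal → Bool}
  (hlim : Order.IsSuccLimit l)
  (h : ∀ a < l, ∃ x ∈ Branches2 κ S, ∀ i < a, y i = phiBranch T s x i)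
include hreg hT hS hs hlim h

theorem restrictFn2_phiInv_mem {c : Ordinal} (hc : c < κ.ord)
    (hcl : ∀ j < c, (phiNode T s (phiInv T s l y) j).len < l) :
    restrictFn2 (phiInv T s l y) c ∈ S := by
  set q := phiInv T s l y
  have hbounded : ∀ {c a : Ordinal}, c < κ.ord → a < l →
      (∀ j < c, (phiNode T s q j).len < a) → restrictFn2 q c ∈ S := fun hc ha hca => by
    obtain ⟨x, hxS, hx⟩ := h _ ha
    rw [restrictFn2_congr fun j hj =>
      phiInv_eq_of_len_phiNode_lt hreg hT hs ha.le hx (hj.trans hc) (hca j hj)]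
    exact hxS _ hc
  rcases Ordinal.zero_or_succ_or_isSuccLimit c with rfl | ⟨e, rfl⟩ | hclim
  · exact hbounded hc hlim.pos fun j hj => absurd hj not_lt_zero
  · rw [Order.succ_eq_add_one] at hc hcl ⊢
    refine hbounded hc (hlim.add_one_lt (hcl e (lt_add_one e))) fun j hj => ?_
    exact Order.lt_add_one_iff.2
      (len_phiNode_le_len_phiNode hreg hT hs (Order.lt_add_one_iff.1 hj) ((lt_add_one e).trans hc))
  · refine hS.restrictFn2_mem_of_isSuccLimit hc hclim fun a ha => ?_
    exact hbounded (ha.trans hc) (hlim.add_one_lt (hcl a ha)) fun j hj =>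
      (len_phiNode_lt_len_phiNode hreg hT hs hj (ha.trans hc)).trans (lt_add_one _)

/-- The image under `φ*` of the branches of `S` is closed. -/
theorem exists_mem_branches_phiBranch_eq (hl : l ≤ κ.ord) :
    ∃ p ∈ Branches2 κ S, ∀ i < l, y i = phiBranch T s p i := by
  have hex : ∀ a < l, ∃ x, ∀ i < a, y i = phiBranch T s x i := fun a ha =>
    (h a ha).imp fun _ hx => hx.2
  set q := phiInv T s l y
  by_cases hreach : ∃ c < κ.ord, l ≤ (phiNode T s q c).len
  · obtain ⟨c, ⟨hcκ, hlc⟩, hmin⟩ := wellFounded_lt.has_min _ hreach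
    have hbelow : ∀ j < c, (phiNode T s q j).len < l := fun j hj =>
      not_le.1 fun hlj => hmin j ⟨hj.trans hcκ, hlj⟩ hj
    obtain ⟨p, hpS, hpq⟩ := hS.exists_mem_branches hreg
      (restrictFn2_phiInv_mem hreg hT hS hs hlim h hcκ hbelow)
    have hpq' : ∀ j < c, p j = q j := (restrictFn2_inj hpq).2
    refine ⟨p, hpS, fun i hi => ?_⟩
    rw [phiBranch_eq_phiBranch_of_lt_len hreg hT hs hcκ hpq'
      (hi.trans_le (phiNode_congr T s c hpq' ▸ hlc)), phiBranch_phiInv hreg hT hs hl hlim hex hi]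
  · simp only [not_exists, not_and, not_le] at hreach
    refine ⟨q, fun c hc => restrictFn2_phiInv_mem hreg hT hS hs hlim h hc fun j hj =>
      hreach j (hj.trans hc), fun i hi => (phiBranch_phiInv hreg hT hs hl hlim hex hi).symm⟩

end ClosedImage

theorem Bool.eq_or_eq_of_ne {a b : Bool} (h : a ≠ b) (c : Bool) : c = a ∨ c = b := by
  cases a <;> cases b <;> cases c <;> simp_all

/-- The tree generated by `φ '' S`, i.e. the initial segments of the `φ*`-images of the branches
of `S`. -/
def imageTree (κ : Cardinal) (T : Set PreSeq2) (s : PreSeq2) (S : Set PreSeq2) : Set PreSeq2 :=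
  { u | ∃ x ∈ Branches2 κ S, ∃ a < κ.ord, u = restrictFn2 (phiBranch T s x) a }

theorem exists_of_restrictFn2_mem_imageTree {κ : Cardinal} {T S : Set PreSeq2} {s : PreSeq2}
    {y : Ordinal → Bool} {a : Ordinal} (h : restrictFn2 y a ∈ imageTree κ T s S) :
    ∃ x ∈ Branches2 κ S, ∀ i < a, y i = phiBranch T s x i := by
  obtain ⟨x, hx, b, -, hyx⟩ := h
  exact ⟨x, hx, (restrictFn2_inj hyx).2⟩

section ImageTree

variable {κ : Cardinal} {T S : Set PreSeq2} (hreg : κ.IsRegular) (hT : IsSacks κ T)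
  {s : PreSeq2} (hs : s ∈ T)
include hreg hT hs

theorem splitting_imageTree_phiNode (hS : IsSacks κ S) {w : Ordinal → Bool} {d : Ordinal}
    (hd : d < κ.ord)
    (hsplit : Splitting S (restrictFn2 w d)) : Splitting (imageTree κ T s S) (phiNode T s w d) := by
  refine splitting_iff.2 fun b => ?_
  obtain ⟨wb, hwb, hwbw⟩ := hS.exists_mem_branches hreg (splitting_iff.1 hsplit b)
  obtain ⟨-, hagree, hbit⟩ := eq_of_restrictFn2_snoc_eq_restrictFn2 hwbw.symm
  have hnode : phiNode T s w d = phiNode T s wb d := phiNode_congr T s d hagree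
  have hL := restrictFn2_phiBranch_len_phiNode (x := wb) hreg hT hs hd
  refine ⟨wb, hwb, _, hreg.isSuccLimit_ord.add_one_lt (len_phiNode_lt_ord (x := wb) hreg hT hs hd),
    ?_⟩
  rw [hnode, ← snoc_restrictFn2, hL, phiBranch_len_phiNode hreg hT hs hd, ← hbit]

theorem exists_phiNode_eq_of_splitting_imageTree {y : Ordinal → Bool} {b : Ordinal}
    (hsplit : Splitting (imageTree κ T s S) (restrictFn2 y b)) :
    ∃ w ∈ Branches2 κ S, ∃ d < κ.ord,
      Splitting S (restrictFn2 w d) ∧ phiNode T s w d = restrictFn2 y b := by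
  obtain ⟨w0, hw0, a0, ha0, h0⟩ := hsplit.1
  obtain ⟨w1, hw1, _, _, h1⟩ := hsplit.2
  obtain ⟨rfl, hy0, hbit0⟩ := eq_of_restrictFn2_snoc_eq_restrictFn2 h0
  obtain ⟨-, hy1, hbit1⟩ := eq_of_restrictFn2_snoc_eq_restrictFn2 h1
  have hbκ : b < κ.ord := (lt_add_one b).trans ha0
  have hagree : ∀ i < b, phiBranch T s w0 i = phiBranch T s w1 i := fun i hi =>
    (hy0 i hi).symm.trans (hy1 i hi)
  have hdiff : {j | j ≤ b ∧ w0 j ≠ w1 j}.Nonempty := by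
    refine not_not.1 fun hsame => Bool.false_ne_true ?_
    rw [← hbit0, ← hbit1]
    exact phiBranch_congr fun j hj =>
      not_not.1 fun hne => hsame ⟨j, Order.lt_add_one_iff.1 hj, hne⟩
  obtain ⟨d, ⟨hdb, hne⟩, hmin⟩ := wellFounded_lt.has_min _ hdiff
  have hbelow : ∀ j < d, w0 j = w1 j := fun j hj => not_not.1 fun hne' =>
    hmin j ⟨hj.le.trans hdb, hne'⟩ hj
  have hdκ : d < κ.ord := hdb.trans_lt hbκ
  -- `w0` and `w1` first differ at `d`, so `φ* w0` and `φ* w1` first differ at `|φ(w0 ↾ d)|`.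
  have hlen : (phiNode T s w0 d).len = b := by
    refine le_antisymm (not_lt.1 fun hlt => ?_) (not_lt.1 fun hlt => hne ?_)
    · have := phiBranch_eq_phiBranch_of_lt_len hreg hT hs hdκ hbelow hlt
      rw [hbit0, hbit1] at this
      exact Bool.false_ne_true this
    · exact eq_of_phiBranch_eq hreg hT hs hagree hdκ hlt
  refine ⟨w0, hw0, d, hdκ, splitting_iff.2 fun c => ?_, ?_⟩
  · rcases Bool.eq_or_eq_of_ne hne c with rfl | rfl
    · rw [snoc_restrictFn2]
      exact hw0 _ (hreg.isSuccLimit_ord.add_one_lt hdκ)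
    · rw [restrictFn2_congr hbelow, snoc_restrictFn2]
      exact hw1 _ (hreg.isSuccLimit_ord.add_one_lt hdκ)
  · rw [← restrictFn2_phiBranch_len_phiNode hreg hT hs hdκ, hlen]
    exact restrictFn2_congr fun i hi => (hy0 i hi).symm

/-- `d ↦ |φ(p ↾ d)|` is continuous, so the first stage at which it reaches `l` is a limit of
splitting stages. -/
theorem exists_len_phiNode_eq_of_cofinal (hS : IsSacks κ S) {p : Ordinal → Bool} {l : Ordinal}
    (hl : l < κ.ord) (hlim : Order.IsSuccLimit l)
    (hcof : ∀ a < l, ∃ d < κ.ord, a ≤ (phiNode T s p d).len ∧ (phiNode T s p d).len < l ∧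
      Splitting S (restrictFn2 p d)) :
    ∃ c < κ.ord, (phiNode T s p c).len = l ∧ Splitting S (restrictFn2 p c) := by
  obtain ⟨c, hlc, hmin⟩ :=
    wellFounded_lt.has_min {c | l ≤ (phiNode T s p c).len} ⟨l, le_len_phiNode hreg hT hs hl⟩
  have hbelow : ∀ d < c, (phiNode T s p d).len < l := fun d hd => not_le.1 fun h => hmin d h hd
  have hcκ : c < κ.ord := (not_lt.1 fun h => hmin l (le_len_phiNode hreg hT hs hl) h).trans_lt hl
  have hlt_c : ∀ d < κ.ord, (phiNode T s p d).len < l → d < c := fun d hd h =>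
    not_le.1 fun hcd => (hlc.trans (len_phiNode_le_len_phiNode hreg hT hs hcd hd)).not_gt h
  have hunbdd : ∀ a < c, ∃ d, a < d ∧ d < c ∧ Splitting S (restrictFn2 p d) := fun a ha => by
    obtain ⟨d, hd, hle, hlt, hsplit⟩ := hcof _ (hlim.add_one_lt (hbelow a ha))
    refine ⟨d, not_le.1 fun hda => ?_, hlt_c d hd hlt, hsplit⟩
    exact (Order.add_one_le_iff.1 hle).not_ge (len_phiNode_le_len_phiNode hreg hT hs hda
      (ha.trans hcκ))
  have hclim : Order.IsSuccLimit c := by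
    obtain ⟨d, hd, -, hlt, -⟩ := hcof 0 hlim.pos
    refine Ordinal.isSuccLimit_iff.2 ⟨(hlt_c d hd hlt).ne_bot, ?_⟩
    refine Order.isSuccPrelimit_iff_succ_lt.2 fun a ha => ?_
    obtain ⟨d, had, hdc, -⟩ := hunbdd a ha
    exact (Order.succ_le_of_lt had).trans_lt hdc
  refine ⟨c, hcκ, le_antisymm (not_lt.1 fun h => ?_) hlc, ?_⟩
  · obtain ⟨d, hd, hld⟩ := exists_lt_len_phiNode_of_isSuccLimit hreg hT hs hcκ hclim h
    exact (hbelow d hd).not_gt hld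
  · refine hS.splitting_of_isSuccLimit hcκ hclim fun a ha => ?_
    obtain ⟨d, had, hdc, hsplit⟩ := hunbdd a ha
    exact ⟨d, had.le, hdc, hsplit⟩

theorem splitting_imageTree_of_isSuccLimit (hS : IsSacks κ S) {y : Ordinal → Bool}
    {l : Ordinal} (hl : l < κ.ord) (hlim : Order.IsSuccLimit l)
    (hcof : ∀ a < l, ∃ b, a ≤ b ∧ b < l ∧ Splitting (imageTree κ T s S) (restrictFn2 y b)) :
    Splitting (imageTree κ T s S) (restrictFn2 y l) := by
  have hnode : ∀ a < l, ∃ w ∈ Branches2 κ S, ∃ d < κ.ord, a ≤ (phiNode T s w d).len ∧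
      (phiNode T s w d).len < l ∧ Splitting S (restrictFn2 w d) ∧
      ∀ i < (phiNode T s w d).len, y i = phiBranch T s w i := fun a ha => by
    obtain ⟨b, hab, hbl, hsplit⟩ := hcof a ha
    obtain ⟨w, hw, d, hd, hwd, heq⟩ := exists_phiNode_eq_of_splitting_imageTree hreg hT hs hsplit
    rw [← restrictFn2_phiBranch_len_phiNode hreg hT hs hd] at heq
    obtain ⟨hlen, hagree⟩ := restrictFn2_inj heq
    exact ⟨w, hw, d, hd, hlen ▸ hab, hlen ▸ hbl, hwd, fun i hi => (hagree i hi).symm⟩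
  obtain ⟨p, -, hp⟩ := exists_mem_branches_phiBranch_eq hreg hT hS hs hlim (fun a ha => by
    obtain ⟨w, hw, d, -, had, -, -, hy⟩ := hnode a ha
    exact ⟨w, hw, fun i hi => hy i (hi.trans_le had)⟩) hl.le
  obtain ⟨c, hc, hlen, hsplit⟩ := exists_len_phiNode_eq_of_cofinal (p := p) hreg hT hs hS hl hlim
    fun a ha => by
      obtain ⟨w, -, d, hd, had, hdl, hwd, hy⟩ := hnode a ha
      have hwp : ∀ j < d, w j = p j := fun j hj => eq_of_phiBranch_eq hreg hT hs
        (fun i hi => (hy i hi).symm.trans (hp i (hi.trans hdl))) (hj.trans hd)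
        (len_phiNode_lt_len_phiNode hreg hT hs hj hd)
      rw [phiNode_congr T s d hwp] at had hdl
      rw [restrictFn2_congr hwp] at hwd
      exact ⟨d, hd, had, hdl, hwd⟩
  rw [restrictFn2_congr hp, ← hlen, restrictFn2_phiBranch_len_phiNode hreg hT hs hc]
  exact splitting_imageTree_phiNode hreg hT hs hS hc hsplit

theorem exists_ext_splitting_imageTree (hS : IsSacks κ S) {x : Ordinal → Bool}
    (hx : x ∈ Branches2 κ S) {a : Ordinal} (ha : a < κ.ord) :
    ∃ t ∈ imageTree κ T s S, (restrictFn2 (phiBranch T s x) a).Ext t ∧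
      Splitting (imageTree κ T s S) t := by
  obtain ⟨t, ht, hxt, hsplit⟩ := hS.exists_ext_splitting (hx a ha)
  obtain ⟨w, hw, hwt⟩ := hS.exists_mem_branches hreg ht
  have hd : t.len < κ.ord := hS.len_lt ht
  have had : a ≤ t.len := hxt.1
  have hxw : ∀ i < a, x i = w i := fun i hi => by
    rw [← restrictFn2_val_of_lt (x := x) hi, hxt.2 i hi, ← hwt,
      restrictFn2_val_of_lt (hi.trans_le had)]
  rw [← hwt] at hsplit
  have hnode := restrictFn2_phiBranch_len_phiNode (x := w) hreg hT hs hd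
  refine ⟨phiNode T s w t.len, ⟨w, hw, _, len_phiNode_lt_ord hreg hT hs hd, hnode.symm⟩, ?_,
    splitting_imageTree_phiNode hreg hT hs hS hd hsplit⟩
  rw [← hnode, restrictFn2_congr fun i hi =>
    phiBranch_congr fun j hj => hxw j (hj.trans_le (Order.add_one_le_iff.2 hi))]
  exact ext_restrictFn2 _ (had.trans (le_len_phiNode hreg hT hs hd))

theorem isSacks_imageTree (hS : IsSacks κ S) : IsSacks κ (imageTree κ T s S) := by
  refine ⟨?_, ?_, ?_, ?_, ?_, ?_, ?_⟩
  · obtain ⟨t, ht⟩ := hS.1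
    obtain ⟨x, hx, -⟩ := hS.exists_mem_branches hreg ht
    exact ⟨_, x, hx, 0, hreg.ord_pos, rfl⟩
  · rintro _ ⟨x, -, a, ha, rfl⟩
    exact ⟨ha, canonical_restrictFn2 _ _⟩
  · rintro _ ⟨x, hx, a, ha, rfl⟩ b (hb : b ≤ a)
    rw [restrictFn2_val_restrictFn2 _ hb]
    exact ⟨x, hx, b, hb.trans_lt ha, rfl⟩
  · rintro _ ⟨x, hx, a, ha, rfl⟩
    exact ⟨_, ⟨x, hx, a + 1, hreg.isSuccLimit_ord.add_one_lt ha, rfl⟩,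
      ext_restrictFn2 _ (lt_add_one a).le, lt_add_one a⟩
  · intro y l hl hlim hmem
    obtain ⟨p, hp, hyp⟩ := exists_mem_branches_phiBranch_eq hreg hT hS hs hlim
      (fun a ha => exists_of_restrictFn2_mem_imageTree (hmem a ha)) hl.le
    rw [restrictFn2_congr hyp]
    exact ⟨p, hp, l, hl, rfl⟩
  · rintro _ ⟨x, hx, a, ha, rfl⟩
    exact exists_ext_splitting_imageTree hreg hT hs hS hx ha
  · exact fun y l hl hlim hcof => splitting_imageTree_of_isSuccLimit hreg hT hs hS hl hlim hcof

theorem imageTree_subset : imageTree κ T s S ⊆ T := by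
  rintro _ ⟨x, -, a, ha, rfl⟩
  exact restrictFn2_phiBranch_mem hreg hT hs ha

end ImageTree

theorem continuous_boundedTop2_of_forall_lt_eq {κ : Cardinal}
    {f : (Ordinal → Bool) → Ordinal → Bool}
    (hf : ∀ a < κ.ord, ∀ x x' : Ordinal → Bool, (∀ i < a, x i = x' i) → ∀ i < a, f x i = f x' i) :
    @Continuous _ _ (boundedTop2 κ) (boundedTop2 κ) f := by
  let : TopologicalSpace (Ordinal → Bool) := boundedTop2 κ
  have hbasic : ∀ a < κ.ord, ∀ t : Ordinal → Bool,
      IsOpen {x : Ordinal → Bool | ∀ i < a, x i = t i} := fun a ha t =>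
    TopologicalSpace.isOpen_generateFrom_of_mem ⟨a, ha, t, rfl⟩
  refine continuous_generateFrom_iff.2 ?_
  rintro _ ⟨a, ha, t, rfl⟩
  refine isOpen_iff_forall_mem_open.2 fun x hx => ⟨{x' | ∀ i < a, x' i = x i}, ?_, hbasic a ha x,
    fun _ _ => rfl⟩
  intro x' hx' i hi
  rw [hf a ha x' x hx' i hi]
  exact hx i hi

/-- `φ*` on all of `Ordinal → Bool`: branches only see the coordinates below `κ`, and copying the
coordinates above `κ` makes every branch of `imageTree` an exact image. -/
noncomputable def phiBranchExt (κ : Cardinal) (T : Set PreSeq2) (s : PreSeq2) (x : Ordinal → Bool) :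
    Ordinal → Bool :=
  fun i => if i < κ.ord then phiBranch T s x i else x i

theorem continuous_phiBranchExt (κ : Cardinal) (T : Set PreSeq2) (s : PreSeq2) :
    @Continuous _ _ (boundedTop2 κ) (boundedTop2 κ) (phiBranchExt κ T s) := by
  refine continuous_boundedTop2_of_forall_lt_eq fun a _ x x' hxx' i hi => ?_
  simp only [phiBranchExt]
  split_ifs
  · exact phiBranch_congr fun j hj => hxx' j (hj.trans_le (Order.add_one_le_iff.2 hi))
  · exact hxx' i hi

theorem exists_phiBranchExt_eq {κ : Cardinal} {T S : Set PreSeq2} (hreg : κ.IsRegular)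
    (hT : IsSacks κ T) (hS : IsSacks κ S) {s : PreSeq2} (hs : s ∈ T) {y : Ordinal → Bool}
    (hy : y ∈ Branches2 κ (imageTree κ T s S)) :
    ∃ p ∈ Branches2 κ S, phiBranchExt κ T s p = y := by
  obtain ⟨p, hp, hyp⟩ := exists_mem_branches_phiBranch_eq hreg hT hS hs hreg.isSuccLimit_ord
    (fun a ha => exists_of_restrictFn2_mem_imageTree (hy a ha)) le_rfl
  set p' : Ordinal → Bool := fun i => if i < κ.ord then p i else y i
  have hpp' : ∀ a < κ.ord, ∀ i < a, p i = p' i := fun a ha i hi => (if_pos (hi.trans ha)).symm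
  refine ⟨p', fun a ha => restrictFn2_congr (hpp' a ha) ▸ hp a ha, funext fun i => ?_⟩
  simp only [phiBranchExt]
  split_ifs with hi
  · rw [← phiBranch_congr (hpp' _ (hreg.isSuccLimit_ord.add_one_lt hi)), hyp i hi]
  · exact if_neg hi

def fullTree (κ : Cardinal) : Set PreSeq2 := { s | s.len < κ.ord ∧ s.Canonical }

theorem isSilver_fullTree {κ : Cardinal} (hreg : κ.IsRegular) : IsSilver κ (fullTree κ) := by
  have hsnoc : ∀ s ∈ fullTree κ, ∀ b, s.snoc b ∈ fullTree κ := fun s hs b =>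
    ⟨hreg.isSuccLimit_ord.add_one_lt hs.1, canonical_snoc s b⟩
  have hrestrict : ∀ x : Ordinal → Bool, ∀ a < κ.ord, restrictFn2 x a ∈ fullTree κ :=
    fun x a ha => ⟨ha, canonical_restrictFn2 x a⟩
  refine ⟨⟨⟨_, hrestrict (fun _ => false) 0 hreg.ord_pos⟩, fun s hs => hs,
    fun s hs a ha => hrestrict _ a (ha.trans_lt hs.1),
    fun s hs => ⟨_, hsnoc s hs false, ext_snoc s false, lt_add_one _⟩,
    fun x l hl _ _ => hrestrict x l hl,
    fun s hs => ⟨s, hs, Ext.refl s, splitting_iff.2 (hsnoc s hs)⟩,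
    fun x l hl _ _ => splitting_iff.2 (hsnoc _ (hrestrict x l hl))⟩, ?_⟩
  exact fun s hs t ht _ b => iff_of_true (hsnoc s hs b) (hsnoc t ht b)

theorem silver_to_sacks_measurable_general (κ : Cardinal) (hreg : κ.IsRegular)
    (Γ : Set (Set (Ordinal → Bool)))
    (hΓ : ∀ f : (Ordinal → Bool) → (Ordinal → Bool),
      @Continuous _ _ (boundedTop2 κ) (boundedTop2 κ) f → ∀ A ∈ Γ, f ⁻¹' A ∈ Γ)
    (hSil : ∀ A ∈ Γ, SilverMeasurable κ A) :
    ∀ A ∈ Γ, SacksMeasurable κ A := by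
  intro A hA T hT
  obtain ⟨s, hs⟩ := hT.1
  obtain ⟨S, ⟨hS, -⟩, -, hSA⟩ := hSil _ (hΓ _ (continuous_phiBranchExt κ T s) A hA)
    (fullTree κ) (isSilver_fullTree hreg)
  refine ⟨imageTree κ T s S, isSacks_imageTree hreg hT hs hS, imageTree_subset hreg hT hs, ?_⟩
  rcases hSA with hsub | hdisj
  · refine Or.inl fun y hy => ?_
    obtain ⟨p, hp, rfl⟩ := exists_phiBranchExt_eq hreg hT hS hs hy
    exact hsub hp
  · refine Or.inr (Set.eq_empty_iff_forall_notMem.2 fun y ⟨hy, hyA⟩ => ?_)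
    obtain ⟨p, hp, rfl⟩ := exists_phiBranchExt_eq hreg hT hS hs hy
    exact hdisj.subset ⟨hp, hyA⟩

/-- If all sets of a pointclass `Γ` closed under continuous preimages are
κ-Silver measurable, then they are all κ-Sacks measurable. -/
theorem silver_to_sacks_measurable (κ : Cardinal) (hreg : κ.IsRegular)
    (hunc : Cardinal.aleph0 < κ) (hlt : Cardinal.powerlt κ κ = κ)
    (Γ : Set (Set (Ordinal → Bool)))
    (hΓ : ∀ f : (Ordinal → Bool) → (Ordinal → Bool),
      @Continuous _ _ (boundedTop2 κ) (boundedTop2 κ) f → ∀ A ∈ Γ, f ⁻¹' A ∈ Γ)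
    (hSil : ∀ A ∈ Γ, SilverMeasurable κ A) :
    ∀ A ∈ Γ, SacksMeasurable κ A :=
  silver_to_sacks_measurable_general κ hreg Γ hΓ hSil
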